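/- With the notation and parametrization of the previous setting (A = b_1^{-1}b_2^{-1} R b_1 b_2, B, C as semi-diagonal shifts of b, and D the q-twist of R̃), the following two statements are equivalent: (a) there exists an invertible scalar solution k : ℂ^n → GL(n,ℂ) of the semi-dynamical reflection equation with these A, B, C, D; (b) D can be written as D_{12}(λ) = p_1(λ+h_2)^{-1} p_2(λ)^{-1} R p_1(λ) p_2(λ+h_1) with the same non-dynamical R that parametrizes A, where p(λ) = b(λ) k(λ). Moreover in direction (b) ⇒ (a), k(λ) := b(λ)^{-1} p(λ) is an invertible scalar solution. -/

import Mathlib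

open Matrix Kronecker BigOperators

/-- `γ ε_i` : the shift vector adding `γ` to the `i`-th dynamical coordinate. -/
def eps (n : ℕ) (γ : ℂ) (i : Fin n) : Fin n → ℂ := fun j => if j = i then γ else 0

/-- `e_{ii}` diagonal matrix unit. -/
def E {n : ℕ} (i : Fin n) : Matrix (Fin n) (Fin n) ℂ := Matrix.single i i 1

/-- Space-1 dynamical shift `X₁(λ+h₂) = ∑ᵢ X(λ+γεᵢ) ⊗ e_{ii}`. -/
noncomputable def sh1 {n : ℕ} (γ : ℂ) (X : (Fin n → ℂ) → Matrix (Fin n) (Fin n) ℂ)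
    (l : Fin n → ℂ) : Matrix (Fin n × Fin n) (Fin n × Fin n) ℂ :=
  ∑ i : Fin n, X (l + eps n γ i) ⊗ₖ E i

/-- Space-2 dynamical shift `X₂(λ+h₁) = ∑ᵢ e_{ii} ⊗ X(λ+γεᵢ)`. -/
noncomputable def sh2 {n : ℕ} (γ : ℂ) (X : (Fin n → ℂ) → Matrix (Fin n) (Fin n) ℂ)
    (l : Fin n → ℂ) : Matrix (Fin n × Fin n) (Fin n × Fin n) ℂ :=
  ∑ i : Fin n, E i ⊗ₖ X (l + eps n γ i)

/-- The semi-dynamical reflection equation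
`A K₁ B K₂(λ+h₁) = K₂ C K₁(λ+h₂) D`. -/
noncomputable def SDRE {n : ℕ} (γ : ℂ)
    (A B C D : (Fin n → ℂ) → Matrix (Fin n × Fin n) (Fin n × Fin n) ℂ)
    (K : (Fin n → ℂ) → Matrix (Fin n) (Fin n) ℂ) : Prop :=
  ∀ l : Fin n → ℂ,
    A l * (K l ⊗ₖ (1 : Matrix (Fin n) (Fin n) ℂ)) * B l * sh2 γ K l
      = ((1 : Matrix (Fin n) (Fin n) ℂ) ⊗ₖ K l) * C l * sh1 γ K l * D l

/-- The detwisting of a non-dynamical `R` by a twist `p`: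
`p₁(λ+h₂)⁻¹ p₂(λ)⁻¹ R p₁(λ) p₂(λ+h₁)`. -/
noncomputable def detwist {n : ℕ} (γ : ℂ) (R : Matrix (Fin n × Fin n) (Fin n × Fin n) ℂ)
    (p : (Fin n → ℂ) → Matrix (Fin n) (Fin n) ℂ) (l : Fin n → ℂ) :
    Matrix (Fin n × Fin n) (Fin n × Fin n) ℂ :=
  sh1 γ (fun μ => (p μ)⁻¹) l * ((1 : Matrix (Fin n) (Fin n) ℂ) ⊗ₖ (p l)⁻¹) * R
    * (p l ⊗ₖ (1 : Matrix (Fin n) (Fin n) ℂ)) * sh2 γ p l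

/-! Conjugating by `b` turns the semi-dynamical reflection equation for `k` into the one with
constant `A = R`, trivial `B = C = 1` and unknown `p = b k`, because `B` and `C` are exactly the
shifts of `b` dressed by `b⁻¹`. In the latter equation `R p₁ p₂(λ+h₁) = p₂ p₁(λ+h₂) D`, the
factor `p₂ p₁(λ+h₂)` is invertible with inverse `p₁(λ+h₂)⁻¹ p₂⁻¹`, so solving for `D` gives
precisely the detwisting of `R` by `p`. -/

section Shifts

variable {n : ℕ} (γ : ℂ)

lemma E_mul_E_self (i : Fin n) : E i * E i = E i := by
  simp [E]

lemma E_mul_E_of_ne {i j : Fin n} (h : i ≠ j) : E i * E j = 0 :=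
  single_mul_single_of_ne 1 i i j h 1

lemma sum_E : ∑ i : Fin n, E i = 1 :=
  sum_single_one

lemma sh1_mul (X Y : (Fin n → ℂ) → Matrix (Fin n) (Fin n) ℂ) (l : Fin n → ℂ) :
    sh1 γ X l * sh1 γ Y l = sh1 γ (fun μ => X μ * Y μ) l := by
  simp only [sh1, Finset.sum_mul_sum, ← mul_kronecker_mul]
  refine Finset.sum_congr rfl fun i _ => ?_
  rw [Finset.sum_eq_single i (fun j _ hji => by rw [E_mul_E_of_ne hji.symm, kronecker_zero])
    (by simp), E_mul_E_self]

lemma sh2_mul (X Y : (Fin n → ℂ) → Matrix (Fin n) (Fin n) ℂ) (l : Fin n → ℂ) :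
    sh2 γ X l * sh2 γ Y l = sh2 γ (fun μ => X μ * Y μ) l := by
  simp only [sh2, Finset.sum_mul_sum, ← mul_kronecker_mul]
  refine Finset.sum_congr rfl fun i _ => ?_
  rw [Finset.sum_eq_single i (fun j _ hji => by rw [E_mul_E_of_ne hji.symm, zero_kronecker])
    (by simp), E_mul_E_self]

lemma sh1_one (l : Fin n → ℂ) : sh1 γ (fun _ => 1) l = 1 := by
  ext ⟨a, b⟩ ⟨c, d⟩
  rw [sh1, Matrix.sum_apply]
  simp only [kronecker_apply, ← Finset.mul_sum, ← Matrix.sum_apply, sum_E]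
  rw [← kronecker_apply, one_kronecker_one]

lemma kronecker_one_mul_sh1 (M : Matrix (Fin n) (Fin n) ℂ)
    (X : (Fin n → ℂ) → Matrix (Fin n) (Fin n) ℂ) (l : Fin n → ℂ) :
    (M ⊗ₖ 1) * sh1 γ X l = ∑ i, (M * X (l + eps n γ i)) ⊗ₖ E i := by
  simp only [sh1, Finset.mul_sum, ← mul_kronecker_mul, one_mul]

lemma one_kronecker_mul_sh2 (M : Matrix (Fin n) (Fin n) ℂ)
    (X : (Fin n → ℂ) → Matrix (Fin n) (Fin n) ℂ) (l : Fin n → ℂ) :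
    (1 ⊗ₖ M) * sh2 γ X l = ∑ i, E i ⊗ₖ (M * X (l + eps n γ i)) := by
  simp only [sh2, Finset.mul_sum, ← mul_kronecker_mul, one_mul]

lemma sh1_mul_sh1_inv {p : (Fin n → ℂ) → Matrix (Fin n) (Fin n) ℂ} (hp : ∀ μ, IsUnit (p μ))
    (l : Fin n → ℂ) : sh1 γ p l * sh1 γ (fun μ => (p μ)⁻¹) l = 1 := by
  have : (fun μ => p μ * (p μ)⁻¹) = fun _ => 1 :=
    funext fun μ => (p μ).mul_nonsing_inv ((p μ).isUnit_iff_isUnit_det.mp (hp μ))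
  rw [sh1_mul, this, sh1_one]

lemma sh1_inv_mul_sh1 {p : (Fin n → ℂ) → Matrix (Fin n) (Fin n) ℂ} (hp : ∀ μ, IsUnit (p μ))
    (l : Fin n → ℂ) : sh1 γ (fun μ => (p μ)⁻¹) l * sh1 γ p l = 1 := by
  have : (fun μ => (p μ)⁻¹ * p μ) = fun _ => 1 :=
    funext fun μ => (p μ).nonsing_inv_mul ((p μ).isUnit_iff_isUnit_det.mp (hp μ))
  rw [sh1_mul, this, sh1_one]

end Shifts

section Reduction

variable {n : ℕ} (γ : ℂ)

noncomputable def twistUnit {p : (Fin n → ℂ) → Matrix (Fin n) (Fin n) ℂ}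
    (hp : ∀ μ, IsUnit (p μ)) (l : Fin n → ℂ) : (Matrix (Fin n × Fin n) (Fin n × Fin n) ℂ)ˣ where
  val := (1 ⊗ₖ p l) * sh1 γ p l
  inv := sh1 γ (fun μ => (p μ)⁻¹) l * (1 ⊗ₖ (p l)⁻¹)
  val_inv := by
    have hpl := (p l).isUnit_iff_isUnit_det.mp (hp l)
    rw [mul_assoc, ← mul_assoc (sh1 γ p l), sh1_mul_sh1_inv γ hp, one_mul, ← mul_kronecker_mul,
      one_mul, (p l).mul_nonsing_inv hpl, one_kronecker_one]
  inv_val := by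
    have hpl := (p l).isUnit_iff_isUnit_det.mp (hp l)
    rw [mul_assoc, ← mul_assoc (1 ⊗ₖ (p l)⁻¹), ← mul_kronecker_mul, one_mul,
      (p l).nonsing_inv_mul hpl, one_kronecker_one, one_mul, sh1_inv_mul_sh1 γ hp]

theorem sdre_const_iff_eq_detwist (R : Matrix (Fin n × Fin n) (Fin n × Fin n) ℂ)
    (D : (Fin n → ℂ) → Matrix (Fin n × Fin n) (Fin n × Fin n) ℂ)
    {p : (Fin n → ℂ) → Matrix (Fin n) (Fin n) ℂ} (hp : ∀ μ, IsUnit (p μ)) :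
    SDRE γ (fun _ => R) 1 1 D p ↔ ∀ l, D l = detwist γ R p l := by
  refine forall_congr' fun l => ?_
  have hdetwist : detwist γ R p l
      = (↑(twistUnit γ hp l)⁻¹ : Matrix (Fin n × Fin n) (Fin n × Fin n) ℂ)
        * (R * (p l ⊗ₖ 1) * sh2 γ p l) := by
    simp only [detwist, twistUnit, Units.inv_mk, mul_assoc]
  rw [hdetwist, Units.eq_inv_mul_iff_mul_eq, eq_comm]
  simp only [twistUnit, Pi.one_apply, mul_one]

theorem sdre_dressed_iff (R : Matrix (Fin n × Fin n) (Fin n × Fin n) ℂ)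
    {b : (Fin n → ℂ) → Matrix (Fin n) (Fin n) ℂ} (hb : ∀ l, IsUnit (b l))
    (D : (Fin n → ℂ) → Matrix (Fin n × Fin n) (Fin n × Fin n) ℂ)
    {A : (Fin n → ℂ) → Matrix (Fin n × Fin n) (Fin n × Fin n) ℂ}
    (hA : ∀ l, A l = ((b l)⁻¹ ⊗ₖ (b l)⁻¹) * R * (b l ⊗ₖ b l))
    {B : (Fin n → ℂ) → Matrix (Fin n × Fin n) (Fin n × Fin n) ℂ}
    (hB : ∀ l, B l = ∑ i : Fin n, E i ⊗ₖ ((b l)⁻¹ * b (l + eps n γ i)))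
    {C : (Fin n → ℂ) → Matrix (Fin n × Fin n) (Fin n × Fin n) ℂ}
    (hC : ∀ l, C l = ∑ i : Fin n, ((b l)⁻¹ * b (l + eps n γ i)) ⊗ₖ E i)
    (k : (Fin n → ℂ) → Matrix (Fin n) (Fin n) ℂ) :
    SDRE γ A B C D k ↔ SDRE γ (fun _ => R) 1 1 D (fun μ => b μ * k μ) := by
  simp only [SDRE, Pi.one_apply, mul_one]
  refine forall_congr' fun l => ?_
  have hbl := (b l).isUnit_iff_isUnit_det.mp (hb l)
  have hL : A l * (k l ⊗ₖ 1) * B l * sh2 γ k l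
      = ((b l)⁻¹ ⊗ₖ (b l)⁻¹) * (R * ((b l * k l) ⊗ₖ 1) * sh2 γ (fun μ => b μ * k μ) l) := by
    have hkron : (b l ⊗ₖ b l) * (k l ⊗ₖ 1) * (1 ⊗ₖ (b l)⁻¹) = (b l * k l) ⊗ₖ 1 := by
      rw [← mul_kronecker_mul, ← mul_kronecker_mul, mul_one, mul_one, (b l).mul_nonsing_inv hbl]
    calc A l * (k l ⊗ₖ 1) * B l * sh2 γ k l
        = ((b l)⁻¹ ⊗ₖ (b l)⁻¹) * (R * ((b l ⊗ₖ b l) * (k l ⊗ₖ 1) * (1 ⊗ₖ (b l)⁻¹))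
            * (sh2 γ b l * sh2 γ k l)) := by
          rw [hA, hB, ← one_kronecker_mul_sh2]
          simp only [mul_assoc]
      _ = _ := by rw [hkron, sh2_mul]
  have hR : (1 ⊗ₖ k l) * C l * sh1 γ k l * D l
      = ((b l)⁻¹ ⊗ₖ (b l)⁻¹) * ((1 ⊗ₖ (b l * k l)) * sh1 γ (fun μ => b μ * k μ) l * D l) := by
    have hkron : (1 ⊗ₖ k l) * ((b l)⁻¹ ⊗ₖ 1) = ((b l)⁻¹ ⊗ₖ (b l)⁻¹) * (1 ⊗ₖ (b l * k l)) := by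
      rw [← mul_kronecker_mul, ← mul_kronecker_mul, one_mul, mul_one, mul_one,
        (b l).nonsing_inv_mul_cancel_left _ hbl]
    calc (1 ⊗ₖ k l) * C l * sh1 γ k l * D l
        = (1 ⊗ₖ k l) * ((b l)⁻¹ ⊗ₖ 1) * (sh1 γ b l * sh1 γ k l) * D l := by
          rw [hC, ← kronecker_one_mul_sh1]
          simp only [mul_assoc]
      _ = _ := by rw [hkron, sh1_mul]; simp only [mul_assoc]
  have hcancel : (b l ⊗ₖ b l) * ((b l)⁻¹ ⊗ₖ (b l)⁻¹) = 1 := by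
    rw [← mul_kronecker_mul, (b l).mul_nonsing_inv hbl, one_kronecker_one]
  rw [hL, hR, (mul_right_injective_of_inv _ _ hcancel).eq_iff]

end Reduction

theorem stmt12_general (n : ℕ) (γ : ℂ)
    (R : Matrix (Fin n × Fin n) (Fin n × Fin n) ℂ)
    (b : (Fin n → ℂ) → Matrix (Fin n) (Fin n) ℂ)
    (hb : ∀ l, IsUnit (b l))
    (D : (Fin n → ℂ) → Matrix (Fin n × Fin n) (Fin n × Fin n) ℂ)
    (A : (Fin n → ℂ) → Matrix (Fin n × Fin n) (Fin n × Fin n) ℂ)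
    (hA : ∀ l, A l = ((b l)⁻¹ ⊗ₖ (b l)⁻¹) * R * (b l ⊗ₖ b l))
    (B : (Fin n → ℂ) → Matrix (Fin n × Fin n) (Fin n × Fin n) ℂ)
    (hB : ∀ l, B l = ∑ i : Fin n, E i ⊗ₖ ((b l)⁻¹ * b (l + eps n γ i)))
    (C : (Fin n → ℂ) → Matrix (Fin n × Fin n) (Fin n × Fin n) ℂ)
    (hC : ∀ l, C l = ∑ i : Fin n, ((b l)⁻¹ * b (l + eps n γ i)) ⊗ₖ E i) :
    ((∃ k : (Fin n → ℂ) → Matrix (Fin n) (Fin n) ℂ,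
        (∀ l, IsUnit (k l)) ∧ SDRE γ A B C D k) ↔
      (∃ k : (Fin n → ℂ) → Matrix (Fin n) (Fin n) ℂ,
        (∀ l, IsUnit (k l)) ∧ SDRE γ A B C D k ∧
          ∀ l, D l = detwist γ R (fun μ => b μ * k μ) l)) ∧
    (∀ p : (Fin n → ℂ) → Matrix (Fin n) (Fin n) ℂ,
        (∀ l, IsUnit (p l)) → (∀ l, D l = detwist γ R p l) →
          (∀ l, IsUnit ((b l)⁻¹ * p l)) ∧ SDRE γ A B C D (fun l => (b l)⁻¹ * p l)) := by
  have gauge := sdre_dressed_iff γ R hb D hA hB hC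
  refine ⟨⟨fun ⟨k, hk, hs⟩ => ⟨k, hk, hs, ?_⟩, fun ⟨k, hk, hs, _⟩ => ⟨k, hk, hs⟩⟩,
    fun p hp hD => ?_⟩
  · exact (sdre_const_iff_eq_detwist γ R D fun l => (hb l).mul (hk l)).mp ((gauge k).mp hs)
  · have hk : ∀ l, IsUnit ((b l)⁻¹ * p l) :=
      fun l => (isUnit_nonsing_inv_iff.mpr (hb l)).mul (hp l)
    have hbp : (fun μ => b μ * ((b μ)⁻¹ * p μ)) = p :=
      funext fun μ => (b μ).mul_nonsing_inv_cancel_left _ ((b μ).isUnit_iff_isUnit_det.mp (hb μ))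
    refine ⟨hk, (gauge _).mpr ?_⟩
    rw [hbp]
    exact (sdre_const_iff_eq_detwist γ R D hp).mpr hD

/-- Proposition 2: with `A = b₁⁻¹b₂⁻¹ R b₁ b₂`, `B, C` the semi-diagonal
shifts of `b` and `D` arbitrary, an invertible scalar solution `k` of the SDRE exists iff
`D` detwists to the same `R` with twist `p = b k`; moreover any detwisting `p` of `D` to `R`
yields the invertible scalar solution `k = b⁻¹ p`. -/
theorem stmt12 (n : ℕ) (γ : ℂ) (hγ : γ ≠ 0)
    (R : Matrix (Fin n × Fin n) (Fin n × Fin n) ℂ)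
    (b : (Fin n → ℂ) → Matrix (Fin n) (Fin n) ℂ)
    (hb : ∀ l, IsUnit (b l))
    (D : (Fin n → ℂ) → Matrix (Fin n × Fin n) (Fin n × Fin n) ℂ)
    (A : (Fin n → ℂ) → Matrix (Fin n × Fin n) (Fin n × Fin n) ℂ)
    (hA : ∀ l, A l = ((b l)⁻¹ ⊗ₖ (b l)⁻¹) * R * (b l ⊗ₖ b l))
    (B : (Fin n → ℂ) → Matrix (Fin n × Fin n) (Fin n × Fin n) ℂ)
    (hB : ∀ l, B l = ∑ i : Fin n, E i ⊗ₖ ((b l)⁻¹ * b (l + eps n γ i)))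
    (C : (Fin n → ℂ) → Matrix (Fin n × Fin n) (Fin n × Fin n) ℂ)
    (hC : ∀ l, C l = ∑ i : Fin n, ((b l)⁻¹ * b (l + eps n γ i)) ⊗ₖ E i) :
    ((∃ k : (Fin n → ℂ) → Matrix (Fin n) (Fin n) ℂ,
        (∀ l, IsUnit (k l)) ∧ SDRE γ A B C D k) ↔
      (∃ k : (Fin n → ℂ) → Matrix (Fin n) (Fin n) ℂ,
        (∀ l, IsUnit (k l)) ∧ SDRE γ A B C D k ∧
          ∀ l, D l = detwist γ R (fun μ => b μ * k μ) l)) ∧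
    (∀ p : (Fin n → ℂ) → Matrix (Fin n) (Fin n) ℂ,
        (∀ l, IsUnit (p l)) → (∀ l, D l = detwist γ R p l) →
          (∀ l, IsUnit ((b l)⁻¹ * p l)) ∧ SDRE γ A B C D (fun l => (b l)⁻¹ * p l)) :=
  stmt12_general n γ R b hb D A hA B hB C hC
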